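/- arXiv:2002.09677 — 2 statements merged into one kernel-verified Lean document; each statement's English description precedes it below -/
import Mathlib

section
/- Let (σ_m)_{m≥1} be a summable nonincreasing sequence of positive reals, N ≥ 2, and ε_m = σ_m p_N(σ^{¬m})/p_N(σ). Then ε_1 ≤ σ_N (1 + β_N), where β_N = min over M' ∈ {2,...,N} of [(N−M'+1)σ_N]^{-1} Σ_{m≥M'} σ_m. -/
open scoped BigOperators

noncomputable def esymm (N : ℕ) (lam : ℕ → ℝ) : ℝ :=
  ∑' s : {s : Finset ℕ // s.card = N}, ∏ u ∈ s.1, lam u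

/-!
Let `τ` be `σ` with its first and `N`-th terms set to `0`, `D = p_{N-1}(τ)` and `E = p_N(τ)`.
Splitting off the other removed index gives `p_N(σ^{¬1}) = σ_N D + E` and
`p_N(σ) ≥ p_N(σ^{¬N}) = σ_1 D + E`. The Guruswami–Sinop inequality
`(N - M' + 1) E ≤ (∑_{m ≥ M'} σ_m) D`, proved by double counting the pairs `(m, s)` with
`m ∈ s`, `m ≥ M'`, then yields `ε_1 ≤ σ_N + (∑_{m ≥ M'} σ_m) / (N - M' + 1)`.
All sums are first taken in `ℝ≥0∞`, where they can be rearranged freely.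
-/

open scoped ENNReal
open Finset Function

noncomputable def esymmENNReal {ι : Type*} (N : ℕ) (f : ι → ℝ≥0∞) : ℝ≥0∞ :=
  ∑' s : {s : Finset ι // s.card = N}, ∏ u ∈ s.1, f u

section esymmENNReal

variable {ι : Type*}

lemma esymmENNReal_zero (f : ι → ℝ≥0∞) : esymmENNReal 0 f = 1 := by
  have : Unique {s : Finset ι // s.card = 0} :=
    { default := ⟨∅, card_empty⟩, uniq := fun s => Subtype.ext (card_eq_zero.mp s.2) }
  rw [esymmENNReal, (hasSum_unique _).tsum_eq,
    card_eq_zero.mp (default : {s : Finset ι // s.card = 0}).2, prod_empty]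

lemma esymmENNReal_mono {N : ℕ} {f g : ι → ℝ≥0∞} (h : f ≤ g) :
    esymmENNReal N f ≤ esymmENNReal N g :=
  ENNReal.tsum_le_tsum fun _ => prod_le_prod' fun i _ => h i

variable [DecidableEq ι]

lemma esymmENNReal_update_zero_le (N : ℕ) (f : ι → ℝ≥0∞) (a : ι) :
    esymmENNReal N (update f a 0) ≤ esymmENNReal N f :=
  esymmENNReal_mono (update_le_self_iff.2 (zero_le : 0 ≤ f a))

lemma tsum_card_succ_ite_mem (a : ι) (n : ℕ) (G : Finset ι → ℝ≥0∞) :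
    ∑' s : {s : Finset ι // s.card = n + 1}, (if a ∈ s.1 then G (s.1.erase a) else 0)
      = ∑' t : {t : Finset ι // t.card = n}, if a ∈ t.1 then 0 else G t.1 := by
  have notMem (t : support fun t : {t : Finset ι // t.card = n} => if a ∈ t.1 then 0 else G t.1) :
      a ∉ t.1.1 := fun h => t.2 (if_pos h)
  refine tsum_eq_tsum_of_ne_zero_bij
    (fun t => ⟨insert a t.1.1, by rw [card_insert_of_notMem (notMem t), t.1.2]⟩) ?_ ?_ ?_
  · intro t₁ t₂ h
    have := congrArg (fun s : {s : Finset ι // s.card = n + 1} => s.1.erase a) h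
    simpa [erase_insert (notMem t₁), erase_insert (notMem t₂), Subtype.ext_iff] using this
  · intro s hs
    have ha : a ∈ s.1 := by_contra fun h => hs (if_neg h)
    refine ⟨⟨⟨s.1.erase a, by rw [card_erase_of_mem ha, s.2, Nat.add_sub_cancel]⟩, ?_⟩, ?_⟩
    · simpa [mem_support, ha] using hs
    · exact Subtype.ext (insert_erase ha)
  · intro t
    simp [erase_insert (notMem t), notMem t]

lemma tsum_ite_mem_prod (f : ι → ℝ≥0∞) (a : ι) (n : ℕ) :
    ∑' s : {s : Finset ι // s.card = n + 1}, (if a ∈ s.1 then ∏ u ∈ s.1, f u else 0)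
      = f a * esymmENNReal n (update f a 0) := by
  calc _ = ∑' s : {s : Finset ι // s.card = n + 1},
          f a * (if a ∈ s.1 then ∏ u ∈ s.1.erase a, f u else 0) := by
        congr! 2 with s
        split_ifs with h
        · exact (mul_prod_erase _ _ h).symm
        · exact (mul_zero _).symm
    _ = f a * esymmENNReal n (update f a 0) := by
        rw [ENNReal.tsum_mul_left, tsum_card_succ_ite_mem a n (fun t => ∏ u ∈ t, f u)]
        refine congrArg _ (tsum_congr fun t => ?_)
        split_ifs with h
        · rw [prod_update_of_mem h, zero_mul]
        · rw [prod_update_of_notMem h]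

lemma esymmENNReal_succ_eq_add_update (f : ι → ℝ≥0∞) (a : ι) (n : ℕ) :
    esymmENNReal (n + 1) f
      = f a * esymmENNReal n (update f a 0) + esymmENNReal (n + 1) (update f a 0) := by
  rw [← tsum_ite_mem_prod, esymmENNReal, esymmENNReal, ← ENNReal.tsum_add]
  congr! 2 with s
  split_ifs with h
  · rw [prod_update_of_mem h, zero_mul, add_zero]
  · rw [prod_update_of_notMem h, zero_add]

lemma tsum_sum_mul_prod (w f : ι → ℝ≥0∞) (n : ℕ) :
    ∑' s : {s : Finset ι // s.card = n + 1}, (∑ a ∈ s.1, w a) * ∏ u ∈ s.1, f u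
      = ∑' a, w a * (f a * esymmENNReal n (update f a 0)) := by
  calc _ = ∑' s : {s : Finset ι // s.card = n + 1}, ∑' a,
          w a * (if a ∈ s.1 then ∏ u ∈ s.1, f u else 0) := by
        refine tsum_congr fun s => ?_
        rw [sum_mul, tsum_eq_sum (s := s.1) fun a ha => by simp [ha]]
        exact sum_congr rfl fun a ha => by simp [ha]
    _ = _ := by
        rw [ENNReal.tsum_comm]
        simp_rw [ENNReal.tsum_mul_left, tsum_ite_mem_prod]

/-- Weighted Guruswami–Sinop inequality: double count the pairs `(a, s)` with `a ∈ s`. -/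
lemma mul_esymmENNReal_succ_le (w f : ι → ℝ≥0∞) {n : ℕ} {k : ℝ≥0∞}
    (hw : ∀ s : Finset ι, s.card = n + 1 → k ≤ ∑ a ∈ s, w a) :
    k * esymmENNReal (n + 1) f ≤ (∑' a, w a * f a) * esymmENNReal n f := by
  calc k * esymmENNReal (n + 1) f
      = ∑' s : {s : Finset ι // s.card = n + 1}, k * ∏ u ∈ s.1, f u := ENNReal.tsum_mul_left.symm
    _ ≤ ∑' s : {s : Finset ι // s.card = n + 1}, (∑ a ∈ s.1, w a) * ∏ u ∈ s.1, f u :=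
        ENNReal.tsum_le_tsum fun s => by gcongr; exact hw s.1 s.2
    _ = ∑' a, w a * (f a * esymmENNReal n (update f a 0)) := tsum_sum_mul_prod w f n
    _ ≤ ∑' a, w a * f a * esymmENNReal n f := ENNReal.tsum_le_tsum fun a => by
        rw [mul_assoc]
        gcongr
        exact esymmENNReal_update_zero_le n f a
    _ = (∑' a, w a * f a) * esymmENNReal n f := ENNReal.tsum_mul_right

lemma esymmENNReal_ne_top {f : ι → ℝ≥0∞} (hf : ∑' i, f i ≠ ⊤) (n : ℕ) :
    esymmENNReal n f ≠ ⊤ := by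
  induction n with
  | zero => simp [esymmENNReal_zero]
  | succ n ih =>
    have h := mul_esymmENNReal_succ_le 1 f (n := n) (k := ((n + 1 : ℕ) : ℝ≥0∞))
      fun s hs => by simp [hs]
    intro htop
    rw [htop, ENNReal.mul_top (by positivity)] at h
    simp only [Pi.one_apply, one_mul] at h
    exact ENNReal.mul_ne_top hf ih (top_le_iff.mp h)

lemma mul_esymmENNReal_update_le {f : ι → ℝ≥0∞} {a b : ι} (hab : a ≠ b) {n : ℕ} {k t : ℝ≥0∞}
    (h : k * esymmENNReal (n + 1) (update (update f a 0) b 0)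
      ≤ t * esymmENNReal n (update (update f a 0) b 0)) :
    k * (f a * esymmENNReal (n + 1) (update f a 0)) ≤ (k * f b + t) * esymmENNReal (n + 1) f := by
  set D := esymmENNReal n (update (update f a 0) b 0)
  set E := esymmENNReal (n + 1) (update (update f a 0) b 0)
  have hB : esymmENNReal (n + 1) (update f a 0) = f b * D + E := by
    rw [esymmENNReal_succ_eq_add_update _ b, update_of_ne hab.symm]
  have hC : esymmENNReal (n + 1) (update f b 0) = f a * D + E := by
    rw [esymmENNReal_succ_eq_add_update _ a, update_of_ne hab, update_comm hab.symm]
  calc k * (f a * esymmENNReal (n + 1) (update f a 0)) = k * f a * f b * D + f a * (k * E) := by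
        rw [hB]; ring
    _ ≤ k * f a * f b * D + f a * (t * D) := by gcongr
    _ = (k * f b + t) * (f a * D) := by ring
    _ ≤ (k * f b + t) * esymmENNReal (n + 1) f := by
        gcongr
        calc f a * D ≤ f a * D + E := le_self_add
          _ = esymmENNReal (n + 1) (update f b 0) := hC.symm
          _ ≤ esymmENNReal (n + 1) f := esymmENNReal_update_zero_le _ f b

end esymmENNReal

lemma tsum_ite_le_eq_tsum_add (f : ℕ → ℝ≥0∞) (r : ℕ) :
    ∑' a, (if r ≤ a then 1 else 0) * f a = ∑' i, f (r + i) := by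
  rw [← (add_right_injective r).tsum_eq]
  · simp
  · intro a ha
    exact ⟨a - r, Nat.add_sub_cancel' (by_contra fun h => ha (by simp [h]))⟩

lemma esymmENNReal_succ_le_tsum_add (f : ℕ → ℝ≥0∞) (n r : ℕ) :
    ((n + 1 - r : ℕ) : ℝ≥0∞) * esymmENNReal (n + 1) f
      ≤ (∑' i, f (r + i)) * esymmENNReal n f := by
  rw [← tsum_ite_le_eq_tsum_add]
  refine mul_esymmENNReal_succ_le _ f fun s hs => ?_
  rw [sum_boole, Nat.cast_le, ← hs, ← card_range r]
  refine (le_card_sdiff _ _).trans (card_le_card fun a ha => ?_)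
  simp_all

lemma esymm_eq_toReal {g : ℕ → ℝ} (hg : 0 ≤ g) (N : ℕ) :
    esymm N g = (esymmENNReal N (ENNReal.ofReal ∘ g)).toReal := by
  rw [esymmENNReal, ENNReal.tsum_toReal_eq fun _ => ENNReal.prod_ne_top fun _ _ => by simp]
  refine tsum_congr fun s => ?_
  rw [ENNReal.toReal_prod]
  exact prod_congr rfl fun u _ => (ENNReal.toReal_ofReal (hg u)).symm

lemma mul_mul_esymmENNReal_update_zero_le (f : ℕ → ℝ≥0∞) {n : ℕ} (hn : n ≠ 0) (r : ℕ) :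
    ((n + 1 - r : ℕ) : ℝ≥0∞) * (f 0 * esymmENNReal (n + 1) (update f 0 0))
      ≤ ((n + 1 - r : ℕ) * f n + ∑' i, f (r + i)) * esymmENNReal (n + 1) f := by
  have hτ : update (update f 0 0) n 0 ≤ f :=
    (update_le_self_iff.2 (zero_le : 0 ≤ update f 0 0 n)).trans
      (update_le_self_iff.2 (zero_le : 0 ≤ f 0))
  refine mul_esymmENNReal_update_le hn.symm <| (esymmENNReal_succ_le_tsum_add _ n r).trans ?_
  gcongr with i
  exact hτ _

lemma mul_mul_esymm_update_zero_le {σ : ℕ → ℝ} (hσ : 0 ≤ σ) (hsum : Summable σ) {n : ℕ}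
    (hn : n ≠ 0) (r : ℕ) :
    ((n + 1 - r : ℕ) : ℝ) * (σ 0 * esymm (n + 1) (update σ 0 0))
      ≤ ((n + 1 - r : ℕ) * σ n + ∑' i, σ (r + i)) * esymm (n + 1) σ := by
  have key := mul_mul_esymmENNReal_update_zero_le (ENNReal.ofReal ∘ σ) hn r
  simp only [comp_apply] at key
  rw [← ENNReal.ofReal_tsum_of_nonneg (fun i => hσ _)
    (hsum.comp_injective (add_right_injective _))] at key
  have hA : esymmENNReal (n + 1) (ENNReal.ofReal ∘ σ) ≠ ⊤ := by
    refine esymmENNReal_ne_top (show ∑' i, ENNReal.ofReal (σ i) ≠ ⊤ from ?_) _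
    rw [← ENNReal.ofReal_tsum_of_nonneg hσ hsum]
    exact ENNReal.ofReal_ne_top
  have hreal := ENNReal.toReal_mono (by finiteness) key
  rwa [ENNReal.toReal_mul, ENNReal.toReal_mul, ENNReal.toReal_mul,
    ENNReal.toReal_add (by finiteness) ENNReal.ofReal_ne_top, ENNReal.toReal_mul,
    ENNReal.toReal_natCast, ENNReal.toReal_ofReal (hσ 0), ENNReal.toReal_ofReal (hσ n),
    ENNReal.toReal_ofReal (tsum_nonneg fun i => hσ _), ← esymm_eq_toReal hσ,
    ← ENNReal.ofReal_zero, ← comp_update,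
    ← esymm_eq_toReal (g := update σ 0 0) (le_update_iff.2 ⟨le_rfl, fun j _ => hσ j⟩)] at hreal

lemma eps_one_le_of_mem_Icc {σ : ℕ → ℝ} (hpos : ∀ m, 0 < σ m) (hsum : Summable σ) {N M' : ℕ}
    (hM' : M' ∈ Icc 2 N) :
    σ 0 * esymm N (update σ 0 0) / esymm N σ ≤
      σ (N - 1) * (1 + (∑' i : ℕ, σ (M' - 1 + i)) / (((N - M' + 1 : ℕ) : ℝ) * σ (N - 1))) := by
  obtain ⟨hM'₂, hM'N⟩ := mem_Icc.mp hM'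
  obtain ⟨n, rfl⟩ : ∃ n, N = n + 1 := ⟨N - 1, by omega⟩
  have hσ : 0 ≤ σ := fun m => (hpos m).le
  have key := mul_mul_esymm_update_zero_le hσ hsum (n := n) (by omega) (M' - 1)
  rw [show n + 1 - (M' - 1) = n + 1 - M' + 1 by omega] at key
  have hk : (0 : ℝ) < (n + 1 - M' + 1 : ℕ) := Nat.cast_pos.2 (Nat.succ_pos _)
  have hσn := hpos n
  have hT : 0 ≤ ∑' i, σ (M' - 1 + i) := tsum_nonneg fun i => hσ _
  have hA : 0 ≤ esymm (n + 1) σ := tsum_nonneg fun s => prod_nonneg fun i _ => hσ i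
  rw [Nat.add_sub_cancel]
  refine div_le_of_le_mul₀ hA (by positivity) (le_of_mul_le_mul_left (key.trans_eq ?_) hk)
  field_simp

-- `σ` is indexed from `0`: the paper's `σ_m` is `σ (m - 1)`.
theorem eps_one_bound_general (σ : ℕ → ℝ) (hpos : ∀ m, 0 < σ m)
    (hsum : Summable σ) (N : ℕ) (hN : 2 ≤ N) :
    σ 0 * esymm N (Function.update σ 0 0) / esymm N σ ≤
      σ (N - 1) *
        (1 + Finset.inf' (Finset.Icc 2 N) (Finset.nonempty_Icc.mpr hN)
          (fun M' : ℕ =>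
            (∑' i : ℕ, σ (M' - 1 + i)) / (((N - M' + 1 : ℕ) : ℝ) * σ (N - 1)))) := by
  obtain ⟨M', hM', hmin⟩ := exists_mem_eq_inf' (nonempty_Icc.mpr hN)
    fun M' : ℕ => (∑' i : ℕ, σ (M' - 1 + i)) / (((N - M' + 1 : ℕ) : ℝ) * σ (N - 1))
  rw [hmin]
  exact eps_one_le_of_mem_Icc hpos hsum hM'

/-- For a summable nonincreasing positive sequence `σ` (indexed from `0`, the paper's `σ_m`
being `σ (m-1)`) and `N ≥ 2`, with `ε_m = σ_m p_N(σ^{¬m})/p_N(σ)`, one has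
`ε_1 ≤ σ_N (1 + β_N)` where
`β_N = min_{M' ∈ [2:N]} [(N−M'+1) σ_N]⁻¹ Σ_{m ≥ M'} σ_m`. -/
theorem eps_one_bound (σ : ℕ → ℝ) (hpos : ∀ m, 0 < σ m) (hmono : Antitone σ)
    (hsum : Summable σ) (N : ℕ) (hN : 2 ≤ N) :
    σ 0 * esymm N (Function.update σ 0 0) / esymm N σ ≤
      σ (N - 1) *
        (1 + Finset.inf' (Finset.Icc 2 N) (Finset.nonempty_Icc.mpr hN)
          (fun M' : ℕ =>
            (∑' i : ℕ, σ (M' - 1 + i)) / (((N - M' + 1 : ℕ) : ℝ) * σ (N - 1)))) :=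
  eps_one_bound_general σ hpos hsum N hN
end

section
/- Under continuous volume sampling with N nodes for a Mercer kernel with summable nonincreasing positive eigenvalues (σ_m), let τ_m = Σ_{U:|U|=N, m∈U} Π_{u∈U}σ_u / Σ_{U:|U|=N} Π_{u∈U}σ_u. Then for every m ≥ 1, σ_m(1 − τ_m) ≤ σ_N(1 + β_N) ≤ σ_N + Σ_{n≥N} σ_n, and consequently for each fixed m, τ_m → 1 as N → ∞. -/
open scoped BigOperators

/-- Sum over `N`-element subsets containing a fixed index `m`. -/
noncomputable def esymmMem (N m : ℕ) (lam : ℕ → ℝ) : ℝ :=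
  ∑' s : {s : Finset ℕ // s.card = N ∧ m ∈ s}, ∏ u ∈ s.1, lam u

/-!
Write `A`, `B`, `C` for the sums of `∏_{u ∈ U} σ_u` over the `N`-sets `U`, over those containing
`m` and over those avoiding `m`, so that `A = B + C` and `σ_m (1 - τ_m) = σ_m C / A`. An `N`-set
avoiding `m` has at least `N - K` elements `u ≥ K`; taking one of them out and double counting
gives `(N - K) C ≤ (Σ_{u ≥ K} σ_u) C'`, where `C'` is the sum over the `(N - 1)`-sets avoiding
`m`. Since `B = σ_m C'`, this yields `(N - K) σ_m C ≤ (Σ_{u ≥ K} σ_u) B ≤ (Σ_{u ≥ K} σ_u) A`.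
For `K = N - 1` the right side is a tail of the convergent series `Σ σ_u`, whence `τ_m → 1`.
All these sums are taken in `ℝ≥0∞`, where they need no summability side conditions.
-/

open ENNReal Filter Topology Finset

noncomputable def familyWeight {α : Type*} (f : α → ℝ≥0∞) (S : Set (Finset α)) : ℝ≥0∞ :=
  ∑' s : S, ∏ u ∈ s.1, f u

section FamilyWeight

variable {α : Type*} (f : α → ℝ≥0∞)

theorem familyWeight_mono {S T : Set (Finset α)} (h : S ⊆ T) :
    familyWeight f S ≤ familyWeight f T :=
  ENNReal.tsum_mono_subtype (fun s => ∏ u ∈ s, f u) h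

theorem familyWeight_union {S T : Set (Finset α)} (h : Disjoint S T) :
    familyWeight f (S ∪ T) = familyWeight f S + familyWeight f T :=
  ENNReal.summable.tsum_union_disjoint (f := fun s => ∏ u ∈ s, f u) h ENNReal.summable

variable [DecidableEq α]

theorem familyWeight_card_eq_add (N : ℕ) (a : α) :
    familyWeight f {s | s.card = N} =
      familyWeight f {s | s.card = N ∧ a ∈ s} + familyWeight f {s | s.card = N ∧ a ∉ s} := by
  rw [← familyWeight_union]
  · congr 1
    ext s
    simp only [Set.mem_ofPred_eq, Set.mem_union]
    tauto
  · exact Set.disjoint_left.mpr fun s hs hs' => hs'.2 hs.2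

theorem familyWeight_card_succ_mem (N : ℕ) (a : α) :
    familyWeight f {s | s.card = N + 1 ∧ a ∈ s} =
      f a * familyWeight f {s | s.card = N ∧ a ∉ s} := by
  let e : {s : Finset α | s.card = N ∧ a ∉ s} ≃ {s : Finset α | s.card = N + 1 ∧ a ∈ s} :=
    { toFun t := ⟨insert a t.1, by rw [card_insert_of_notMem t.2.2, t.2.1],
        mem_insert_self a t.1⟩
      invFun s := ⟨s.1.erase a, by rw [card_erase_of_mem s.2.2, s.2.1, Nat.add_sub_cancel],
        notMem_erase a s.1⟩
      left_inv t := Subtype.ext (erase_insert t.2.2)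
      right_inv s := Subtype.ext (insert_erase s.2.2) }
  rw [familyWeight, ← e.tsum_eq, familyWeight, ← ENNReal.tsum_mul_left]
  exact tsum_congr fun t => prod_insert t.2.2

/-- Double counting of the pairs `(s, u)` with `u ∈ s \ R`, through `(s, u) ↦ (u, s.erase u)`. -/
theorem tsum_card_sdiff_mul_prod_le (R : Finset α) {S T : Set (Finset α)}
    (hST : ∀ s ∈ S, ∀ u ∈ s \ R, s.erase u ∈ T) :
    ∑' s : S, ((s.1 \ R).card : ℝ≥0∞) * ∏ u ∈ s.1, f u ≤
      (∑' u : {u // u ∉ R}, f u) * familyWeight f T := by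
  let j : (Σ s : S, (s.1 \ R : Finset α)) → {u // u ∉ R} × T :=
    fun p => (⟨p.2, (mem_sdiff.mp p.2.2).2⟩, ⟨p.1.1.erase p.2, hST _ p.1.2 _ p.2.2⟩)
  have hj : Function.Injective j := by
    rintro ⟨⟨s, hs⟩, ⟨u, hu⟩⟩ ⟨⟨s', hs'⟩, ⟨u', hu'⟩⟩ h
    simp only [j, Prod.mk.injEq, Subtype.mk.injEq] at h
    obtain ⟨rfl, he⟩ := h
    have hus : u ∈ s := (mem_sdiff.mp hu).1
    have hus' : u ∈ s' := (mem_sdiff.mp hu').1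
    obtain rfl : s = s' := by rw [← insert_erase hus, ← insert_erase hus', he]
    rfl
  calc ∑' s : S, ((s.1 \ R).card : ℝ≥0∞) * ∏ u ∈ s.1, f u
      = ∑' s : S, ∑' u : (s.1 \ R : Finset α), f u * ∏ v ∈ s.1.erase u, f v := by
        refine tsum_congr fun s => ?_
        rw [Finset.tsum_subtype (s.1 \ R) fun u => f u * ∏ v ∈ s.1.erase u, f v,
          ← nsmul_eq_mul, ← sum_const]
        exact sum_congr rfl fun u hu => (mul_prod_erase _ f (mem_sdiff.mp hu).1).symm
    _ = ∑' p : Σ s : S, (s.1 \ R : Finset α), f (j p).1 * ∏ v ∈ (j p).2.1, f v :=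
        (ENNReal.tsum_sigma' fun p => f (j p).1 * ∏ v ∈ (j p).2.1, f v).symm
    _ ≤ ∑' q : {u // u ∉ R} × T, f q.1 * ∏ v ∈ q.2.1, f v :=
        ENNReal.tsum_comp_le_tsum_of_injective hj (fun q => f q.1 * ∏ v ∈ q.2.1, f v)
    _ = (∑' u : {u // u ∉ R}, f u) * familyWeight f T := by
        simp_rw [ENNReal.tsum_prod', ENNReal.tsum_mul_left, familyWeight, ENNReal.tsum_mul_right]

theorem familyWeight_card_succ_le (N : ℕ) :
    familyWeight f {s | s.card = N + 1} ≤ (∑' u, f u) * familyWeight f {s | s.card = N} := by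
  have hcount := tsum_card_sdiff_mul_prod_le f ∅ (S := {s | s.card = N + 1})
    (T := {s | s.card = N}) fun s hs u hu => by
      rw [Set.mem_ofPred_eq, card_erase_of_mem (mem_sdiff.mp hu).1, hs.out, Nat.add_sub_cancel]
  have hall : ∑' u : {u // u ∉ (∅ : Finset α)}, f u = ∑' u, f u :=
    (Equiv.subtypeUnivEquiv fun u => notMem_empty u).tsum_eq f
  rw [hall] at hcount
  refine le_trans (ENNReal.tsum_le_tsum fun s => ?_) hcount
  rw [sdiff_empty, s.2.out]
  exact le_mul_of_one_le_left' (by exact_mod_cast Nat.succ_pos N)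

theorem familyWeight_card_le_pow (N : ℕ) :
    familyWeight f {s | s.card = N} ≤ (∑' u, f u) ^ N := by
  induction N with
  | zero =>
    rw [pow_zero, familyWeight, tsum_eq_single ⟨∅, card_empty⟩]
    · simp
    · rintro ⟨s, hs⟩ hne
      exact absurd (Subtype.ext (card_eq_zero.mp hs)) hne
  | succ N ih =>
    calc familyWeight f {s | s.card = N + 1} ≤ (∑' u, f u) * familyWeight f {s | s.card = N} :=
          familyWeight_card_succ_le f N
      _ ≤ (∑' u, f u) * (∑' u, f u) ^ N := by gcongr
      _ = (∑' u, f u) ^ (N + 1) := (pow_succ' _ _).symm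

end FamilyWeight

theorem card_sub_mul_familyWeight_card_notMem_le (f : ℕ → ℝ≥0∞) (N K m : ℕ) :
    ((N + 1 - K : ℕ) : ℝ≥0∞) * familyWeight f {s | s.card = N + 1 ∧ m ∉ s} ≤
      (∑' i, f (i + K)) * familyWeight f {s | s.card = N ∧ m ∉ s} := by
  have hcount := tsum_card_sdiff_mul_prod_le f (range K) (S := {s | s.card = N + 1 ∧ m ∉ s})
    (T := {s | s.card = N ∧ m ∉ s}) fun s hs u hu =>
      ⟨by rw [card_erase_of_mem (mem_sdiff.mp hu).1, hs.1, Nat.add_sub_cancel],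
        fun h => hs.2 (mem_of_mem_erase h)⟩
  rw [← (notMemRangeEquiv K).symm.tsum_eq, coe_notMemRangeEquiv_symm] at hcount
  refine le_trans ?_ hcount
  rw [familyWeight, ← ENNReal.tsum_mul_left]
  refine ENNReal.tsum_le_tsum fun s => mul_le_mul_left ?_ _
  calc ((N + 1 - K : ℕ) : ℝ≥0∞) = ((s.1.card - (range K).card : ℕ) : ℝ≥0∞) := by
        rw [s.2.1, card_range]
    _ ≤ ((s.1 \ range K).card : ℝ≥0∞) := by exact_mod_cast le_card_sdiff _ _

section Real

variable {α : Type*} {σ : α → ℝ}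

theorem tsum_prod_eq_toReal_familyWeight (hσ : ∀ u, 0 ≤ σ u) (S : Set (Finset α)) :
    ∑' s : S, ∏ u ∈ s.1, σ u = (familyWeight (fun u => ENNReal.ofReal (σ u)) S).toReal := by
  rw [familyWeight, ENNReal.tsum_toReal_eq fun s => prod_ne_top fun u _ => ofReal_ne_top]
  refine tsum_congr fun s => ?_
  rw [toReal_prod]
  exact prod_congr rfl fun u _ => (toReal_ofReal (hσ u)).symm

theorem familyWeight_ofReal_card_ne_top [DecidableEq α] (hσ : ∀ u, 0 ≤ σ u) (hsum : Summable σ)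
    (N : ℕ) :
    familyWeight (fun u => ENNReal.ofReal (σ u)) {s | s.card = N} ≠ ⊤ := by
  refine ne_top_of_le_ne_top (pow_ne_top ?_) (familyWeight_card_le_pow _ N)
  rw [← ofReal_tsum_of_nonneg hσ hsum]
  exact ofReal_ne_top

end Real

theorem familyWeight_card_pos {f : ℕ → ℝ≥0∞} (hf : ∀ u, f u ≠ 0) (N : ℕ) :
    0 < familyWeight f {s | s.card = N} :=
  calc 0 < ∏ u ∈ range N, f u :=
        CanonicallyOrderedAdd.prod_pos.mpr fun u _ => pos_iff_ne_zero.mpr (hf u)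
    _ ≤ familyWeight f {s | s.card = N} :=
        ENNReal.le_tsum (f := fun s : {s : Finset ℕ | s.card = N} => ∏ u ∈ s.1, f u)
          ⟨range N, card_range N⟩

section LeverageScores

variable {σ : ℕ → ℝ}

theorem esymm_eq_toReal_familyWeight (hσ : ∀ u, 0 ≤ σ u) (N : ℕ) :
    esymm N σ = (familyWeight (fun u => ENNReal.ofReal (σ u)) {s | s.card = N}).toReal :=
  tsum_prod_eq_toReal_familyWeight hσ _

theorem esymmMem_eq_toReal_familyWeight (hσ : ∀ u, 0 ≤ σ u) (N m : ℕ) :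
    esymmMem N m σ =
      (familyWeight (fun u => ENNReal.ofReal (σ u)) {s | s.card = N ∧ m ∈ s}).toReal :=
  tsum_prod_eq_toReal_familyWeight hσ _

theorem esymmMem_div_esymm_le_one (hσ : ∀ u, 0 ≤ σ u) (hsum : Summable σ) (N m : ℕ) :
    esymmMem N m σ / esymm N σ ≤ 1 := by
  refine div_le_one_of_le₀ ?_ (tsum_nonneg fun s => prod_nonneg fun u _ => hσ u)
  rw [esymmMem_eq_toReal_familyWeight hσ, esymm_eq_toReal_familyWeight hσ]
  exact toReal_mono (familyWeight_ofReal_card_ne_top hσ hsum N)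
    (familyWeight_mono _ fun s hs => hs.1)

theorem mul_one_sub_esymmMem_div_esymm_le (hpos : ∀ u, 0 < σ u) (hsum : Summable σ) {N K : ℕ}
    (hKN : K < N) (m : ℕ) :
    σ m * (1 - esymmMem N m σ / esymm N σ) ≤ (∑' i, σ (i + K)) / ((N - K : ℕ) : ℝ) := by
  obtain ⟨n, rfl⟩ : ∃ n, N = n + 1 := ⟨N - 1, by omega⟩
  have hσ : ∀ u, 0 ≤ σ u := fun u => (hpos u).le
  set g := fun u => ENNReal.ofReal (σ u)
  set A := familyWeight g {s | s.card = n + 1}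
  set B := familyWeight g {s | s.card = n + 1 ∧ m ∈ s}
  set C := familyWeight g {s | s.card = n + 1 ∧ m ∉ s}
  have hAtop : A ≠ ⊤ := familyWeight_ofReal_card_ne_top hσ hsum _
  have hApos : 0 < A.toReal :=
    toReal_pos (familyWeight_card_pos (fun u => (ofReal_pos.mpr (hpos u)).ne') _).ne' hAtop
  have hsplit : A = B + C := familyWeight_card_eq_add g _ m
  have htail : ∑' i, g (i + K) = ENNReal.ofReal (∑' i, σ (i + K)) :=
    (ofReal_tsum_of_nonneg (fun i => hσ _) (hsum.comp_injective (add_left_injective K))).symm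
  have hcount : ((n + 1 - K : ℕ) : ℝ≥0∞) * (g m * C) ≤ (∑' i, g (i + K)) * A :=
    calc ((n + 1 - K : ℕ) : ℝ≥0∞) * (g m * C)
        = g m * (((n + 1 - K : ℕ) : ℝ≥0∞) * C) := by ring
      _ ≤ g m * ((∑' i, g (i + K)) * familyWeight g {s | s.card = n ∧ m ∉ s}) :=
          mul_le_mul_right (card_sub_mul_familyWeight_card_notMem_le g n K m) _
      _ = (∑' i, g (i + K)) * B := by rw [show B = _ from familyWeight_card_succ_mem g n m]; ring
      _ ≤ (∑' i, g (i + K)) * A := by gcongr; rw [hsplit]; exact le_self_add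
  have hreal : ((n + 1 - K : ℕ) : ℝ) * (σ m * C.toReal) ≤ (∑' i, σ (i + K)) * A.toReal := by
    have := toReal_mono (mul_ne_top (htail ▸ ofReal_ne_top) hAtop) hcount
    rwa [htail, toReal_mul, toReal_mul, toReal_mul, toReal_natCast, toReal_ofReal (hσ m),
      toReal_ofReal (tsum_nonneg fun i => hσ _)] at this
  have hBtop : B ≠ ⊤ := ne_top_of_le_ne_top hAtop (hsplit ▸ le_self_add)
  have hCtop : C ≠ ⊤ := ne_top_of_le_ne_top hAtop (hsplit ▸ le_add_self)
  have hτ : 1 - B.toReal / A.toReal = C.toReal / A.toReal := by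
    rw [one_sub_div hApos.ne', hsplit, toReal_add hBtop hCtop, add_sub_cancel_left]
  rw [esymmMem_eq_toReal_familyWeight hσ, esymm_eq_toReal_familyWeight hσ, hτ, ← mul_div_assoc,
    div_le_div_iff₀ hApos (by exact_mod_cast Nat.sub_pos_of_lt hKN)]
  linarith

end LeverageScores

theorem mul_one_add_div_mul_self {a : ℝ} (ha : a ≠ 0) (t d : ℝ) :
    a * (1 + t / (d * a)) = a + t / d := by
  rw [mul_add, mul_one, mul_div_assoc', mul_comm d a, mul_div_mul_left _ _ ha]

theorem tendsto_nhds_one_of_mul_one_sub_le {ι : Type*} {l : Filter ι} {x e : ι → ℝ} {c : ℝ}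
    (hc : 0 < c) (hx : ∀ i, x i ≤ 1) (hxe : ∀ᶠ i in l, c * (1 - x i) ≤ e i)
    (he : Tendsto e l (𝓝 0)) : Tendsto x l (𝓝 1) := by
  have hlow : Tendsto (fun i => 1 - e i / c) l (𝓝 1) := by
    simpa using (he.div_const c).const_sub 1
  refine tendsto_of_tendsto_of_tendsto_of_le_of_le' hlow tendsto_const_nhds ?_
    (Eventually.of_forall hx)
  filter_upwards [hxe] with i hi
  rw [sub_le_comm, le_div_iff₀ hc]
  linarith

/-- `σ` is indexed from `0`: the paper's `σ_N` is `σ (N - 1)`. -/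
theorem leverage_scores_tendsto_one_general (σ : ℕ → ℝ) (hpos : ∀ m, 0 < σ m)
    (hsum : Summable σ) :
    (∀ N : ℕ, ∀ hN : 2 ≤ N, ∀ m : ℕ,
      σ m * (1 - esymmMem N m σ / esymm N σ) ≤
          σ (N - 1) *
            (1 + Finset.inf' (Finset.Icc 2 N) (Finset.nonempty_Icc.mpr hN)
              (fun M : ℕ =>
                (∑' i : ℕ, σ (M - 1 + i)) / (((N - M + 1 : ℕ) : ℝ) * σ (N - 1)))) ∧
        σ (N - 1) *
            (1 + Finset.inf' (Finset.Icc 2 N) (Finset.nonempty_Icc.mpr hN)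
              (fun M : ℕ =>
                (∑' i : ℕ, σ (M - 1 + i)) / (((N - M + 1 : ℕ) : ℝ) * σ (N - 1)))) ≤
          σ (N - 1) + ∑' i : ℕ, σ (N - 1 + i)) ∧
      ∀ m : ℕ,
        Filter.Tendsto (fun N : ℕ => esymmMem N m σ / esymm N σ) Filter.atTop (nhds 1) := by
  have hbound : ∀ {N M : ℕ}, 2 ≤ M → M ≤ N → ∀ m, σ m * (1 - esymmMem N m σ / esymm N σ) ≤
      (∑' i : ℕ, σ (M - 1 + i)) / ((N - M + 1 : ℕ) : ℝ) := fun {N M} hM hMN m => by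
    simpa only [add_comm _ (M - 1), show N - (M - 1) = N - M + 1 by omega] using
      mul_one_sub_esymmMem_div_esymm_le hpos hsum (N := N) (K := M - 1) (by omega) m
  refine ⟨fun N hN m => ⟨?_, ?_⟩, fun m => ?_⟩
  · obtain ⟨M, hM, hmin⟩ := exists_mem_eq_inf' (nonempty_Icc.mpr hN)
      fun M : ℕ => (∑' i : ℕ, σ (M - 1 + i)) / (((N - M + 1 : ℕ) : ℝ) * σ (N - 1))
    obtain ⟨hM2, hMN⟩ := mem_Icc.mp hM
    rw [hmin, mul_one_add_div_mul_self (hpos (N - 1)).ne']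
    linarith [hbound hM2 hMN m, hpos (N - 1)]
  · calc _ ≤ σ (N - 1) *
            (1 + (∑' i : ℕ, σ (N - 1 + i)) / (((N - N + 1 : ℕ) : ℝ) * σ (N - 1))) := by
          gcongr
          · exact (hpos _).le
          · exact inf'_le _ (mem_Icc.mpr ⟨hN, le_rfl⟩)
      _ = σ (N - 1) + ∑' i : ℕ, σ (N - 1 + i) := by
          rw [mul_one_add_div_mul_self (hpos (N - 1)).ne']; simp
  · refine tendsto_nhds_one_of_mul_one_sub_le (hpos m)
      (esymmMem_div_esymm_le_one (fun u => (hpos u).le) hsum · m) ?_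
      ((tendsto_sum_nat_add σ).comp (tendsto_sub_atTop_nat 1))
    filter_upwards [eventually_ge_atTop 2] with N hN
    simpa [add_comm] using hbound hN le_rfl m

/-- For a summable nonincreasing positive eigenvalue sequence `σ` (indexed from `0`, the
paper's `σ_m` being `σ (m-1)`) and the expected leverage scores
`τ_m = Σ_{|U|=N, m∈U} Π σ_u / Σ_{|U|=N} Π σ_u` of continuous volume sampling with `N` nodes:
for every `N ≥ 2` and every `m`, `σ_m (1 − τ_m) ≤ σ_N (1 + β_N) ≤ σ_N + Σ_{n ≥ N} σ_n`,
where `β_N = min_{M ∈ [2:N]} [(N−M+1) σ_N]⁻¹ Σ_{n ≥ M} σ_n`; consequently, for each fixed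
`m`, `τ_m → 1` as `N → ∞`. -/
theorem leverage_scores_tendsto_one (σ : ℕ → ℝ) (hpos : ∀ m, 0 < σ m) (hmono : Antitone σ)
    (hsum : Summable σ) :
    (∀ N : ℕ, ∀ hN : 2 ≤ N, ∀ m : ℕ,
      σ m * (1 - esymmMem N m σ / esymm N σ) ≤
          σ (N - 1) *
            (1 + Finset.inf' (Finset.Icc 2 N) (Finset.nonempty_Icc.mpr hN)
              (fun M : ℕ =>
                (∑' i : ℕ, σ (M - 1 + i)) / (((N - M + 1 : ℕ) : ℝ) * σ (N - 1)))) ∧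
        σ (N - 1) *
            (1 + Finset.inf' (Finset.Icc 2 N) (Finset.nonempty_Icc.mpr hN)
              (fun M : ℕ =>
                (∑' i : ℕ, σ (M - 1 + i)) / (((N - M + 1 : ℕ) : ℝ) * σ (N - 1)))) ≤
          σ (N - 1) + ∑' i : ℕ, σ (N - 1 + i)) ∧
      ∀ m : ℕ,
        Filter.Tendsto (fun N : ℕ => esymmMem N m σ / esymm N σ) Filter.atTop (nhds 1) :=
  leverage_scores_tendsto_one_general σ hpos hsum
end
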